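/- Let m, n ≥ 2 and let G be the ordered graph on vertices v_1, ..., v_{m+n} whose only edges are the two crossing edges v_1 v_{m+1} and v_m v_{m+n}. Then R(G) = m + n + max(m,n) - 1. -/

import Mathlib

/-- A `t`-edge-coloring `c` of the complete graph on the ordered vertex set `Fin N`
contains a monochromatic ordered copy of the ordered graph `G` on `Fin M`. -/
def HasMonoCopy {M N t : ℕ} (G : SimpleGraph (Fin M)) (c : Fin N → Fin N → Fin t) : Prop :=
  ∃ k : Fin t, ∃ f : Fin M → Fin N, StrictMono f ∧
    ∀ u v : Fin M, u < v → G.Adj u v → c (f u) (f v) = k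

/-- The `t`-color ordered Ramsey number of the ordered graph `G`: the least `N` such that
every `t`-coloring of the edges of the complete graph on `Fin N` contains a monochromatic
ordered copy of `G`. -/
noncomputable def orderedRamsey {M : ℕ} (t : ℕ) (G : SimpleGraph (Fin M)) : ℕ :=
  sInf {N : ℕ | ∀ c : Fin N → Fin N → Fin t, HasMonoCopy G c}

/-- An interval coloring of an ordered graph with `k` parts, encoded as a monotone
surjection onto `Fin k` whose fibers (the parts, which are intervals of consecutive
vertices) are independent sets. -/
def IsIntervalColoring {N k : ℕ} (G : SimpleGraph (Fin N)) (p : Fin N → Fin k) : Prop :=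
  Monotone p ∧ Function.Surjective p ∧ ∀ u v : Fin N, G.Adj u v → p u ≠ p v

/-- The interval chromatic number of an ordered graph. -/
noncomputable def intervalChromatic {N : ℕ} (G : SimpleGraph (Fin N)) : ℕ :=
  sInf {k : ℕ | ∃ p : Fin N → Fin k, IsIntervalColoring G p}

/-
A monochromatic ordered copy of the graph with crossing edges `v_1 v_{m+1}` and `v_m v_{m+n}` is
the same as a monochromatic pair of crossing edges `ae`, `bd` with `a < b < e < d`,
`b - a ≥ m - 1` and `d - e ≥ n - 1`: the remaining vertices can be placed in the gaps.

Upper bound, for `m ≤ n` (the other case follows by reversing the order): on `m + 2n - 1`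
vertices, five candidate pairs built from six fixed vertices cannot all be bichromatic in a
2-coloring. Lower bound: with fewer vertices, cut the vertex set into two intervals (of sizes
`m + n - 1` and `< n`, or `m - 1` and `< m + n`), coloring an edge by whether it crosses the cut.
-/

theorem StrictMono.fin_val_add_le {M N : ℕ} {f : Fin M → Fin N} (hf : StrictMono f)
    {i j : Fin M} {k : ℕ} (hij : (i : ℕ) + k ≤ j) : (f i : ℕ) + k ≤ f j := by
  have hcard := Finset.card_le_card_of_injOn f
    (s := Finset.Icc i j) (t := Finset.Icc (f i) (f j))
    (fun x hx => by
      simp only [Finset.mem_coe, Finset.mem_Icc] at hx ⊢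
      exact ⟨hf.monotone hx.1, hf.monotone hx.2⟩) hf.injective.injOn
  simp only [Fin.card_Icc] at hcard
  have := hf.monotone (show i ≤ j by omega)
  omega

theorem orderedRamsey_eq_of_forall {M t R : ℕ} {G : SimpleGraph (Fin M)}
    (hR : ∀ c : Fin R → Fin R → Fin t, HasMonoCopy G c)
    (hlt : ∀ N < R, ∃ c : Fin N → Fin N → Fin t, ¬ HasMonoCopy G c) :
    orderedRamsey t G = R :=
  IsLeast.csInf_eq ⟨hR, fun N hN => not_lt.1 fun h => (hlt N h).elim fun c hc => hc (hN c)⟩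

def HasMonoCrossingPair (m n : ℕ) {N : ℕ} {α : Type*} (c : Fin N → Fin N → α) : Prop :=
  ∃ a b e d : Fin N, (a : ℕ) + (m - 1) ≤ b ∧ b < e ∧ (e : ℕ) + (n - 1) ≤ d ∧ c a e = c b d

theorem HasMonoCrossingPair.of_rev {m n N : ℕ} {α : Type*} {c : Fin N → Fin N → α}
    (h : HasMonoCrossingPair n m fun x y => c y.rev x.rev) : HasMonoCrossingPair m n c := by
  obtain ⟨a, b, e, d, hab, hbe, hed, hcol⟩ := h
  refine ⟨d.rev, e.rev, b.rev, a.rev, ?_, Fin.rev_lt_rev.2 hbe, ?_, hcol.symm⟩ <;>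
    simp only [Fin.val_rev] <;> omega

theorem hasMonoCrossingPair_of_le {m n N : ℕ} (hm : 0 < m) (hmn : m ≤ n)
    (hN : m + 2 * n - 1 ≤ N) (c : Fin N → Fin N → Fin 2) : HasMonoCrossingPair m n c := by
  by_contra h
  simp only [HasMonoCrossingPair, not_exists, not_and] at h
  have two_colors : ∀ x y z : Fin 2, x ≠ y → x ≠ z → y = z := by decide
  let x₀ : Fin N := ⟨0, by omega⟩
  let x₁ : Fin N := ⟨m - 1, by omega⟩
  let x₂ : Fin N := ⟨m, by omega⟩
  let x₃ : Fin N := ⟨m + n - 2, by omega⟩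
  let x₄ : Fin N := ⟨m + n - 1, by omega⟩
  let x₅ : Fin N := ⟨m + 2 * n - 2, by omega⟩
  obtain ⟨h₁, h₂, h₃, h₄, h₅⟩ : c x₀ x₄ ≠ c x₁ x₅ ∧ c x₀ x₄ ≠ c x₃ x₅ ∧ c x₀ x₂ ≠ c x₁ x₅ ∧
      c x₀ x₂ ≠ c x₁ x₄ ∧ c x₁ x₄ ≠ c x₃ x₅ := by
    refine ⟨h _ _ _ _ ?_ ?_ ?_, h _ _ _ _ ?_ ?_ ?_, h _ _ _ _ ?_ ?_ ?_, h _ _ _ _ ?_ ?_ ?_,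
      h _ _ _ _ ?_ ?_ ?_⟩ <;> simp only [x₀, x₁, x₂, x₃, x₄, x₅, Fin.lt_def] <;> omega
  exact h₅ ((two_colors _ _ _ h₃ h₄).symm.trans (two_colors _ _ _ h₁ h₂))

theorem hasMonoCrossingPair_of_le_card {m n N : ℕ} (hm : 0 < m) (hn : 0 < n)
    (hN : m + n + max m n - 1 ≤ N) (c : Fin N → Fin N → Fin 2) : HasMonoCrossingPair m n c := by
  rcases le_total m n with hmn | hnm
  · exact hasMonoCrossingPair_of_le hm hmn (by omega) c
  · exact .of_rev (hasMonoCrossingPair_of_le hn hnm (by omega) _)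

def cutColoring (N s : ℕ) (u v : Fin N) : Fin 2 :=
  if ((u : ℕ) < s ↔ (v : ℕ) < s) then 0 else 1

theorem not_hasMonoCrossingPair_cutColoring {m n N s : ℕ}
    (hs : s < m + n) (hNs : N < s + m + n) (hcut : s < m ∨ N < s + n) :
    ¬ HasMonoCrossingPair m n (cutColoring N s) := by
  rintro ⟨a, b, e, d, hab, hbe, hed, hcol⟩
  have hd := d.isLt
  simp only [cutColoring] at hcol
  split_ifs at hcol <;> omega

theorem exists_not_hasMonoCrossingPair {m n N : ℕ} (hN : N < m + n + max m n - 1) :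
    ∃ c : Fin N → Fin N → Fin 2, ¬ HasMonoCrossingPair m n c := by
  rcases le_total m n with hmn | hnm
  · exact ⟨_, not_hasMonoCrossingPair_cutColoring (s := m + n - 1) (by omega) (by omega)
      (.inr (by omega))⟩
  · exact ⟨_, not_hasMonoCrossingPair_cutColoring (s := m - 1) (by omega) (by omega)
      (.inl (by omega))⟩

def IsTwoCrossingEdgesGraph (m n : ℕ) (G : SimpleGraph (Fin (m + n))) : Prop :=
  ∀ u v : Fin (m + n), u < v →
    (G.Adj u v ↔ (u : ℕ) = 0 ∧ (v : ℕ) = m ∨ (u : ℕ) = m - 1 ∧ (v : ℕ) = m + n - 1)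

section TwoCrossingEdges

variable {m n : ℕ} {G : SimpleGraph (Fin (m + n))}

theorem HasMonoCopy.hasMonoCrossingPair (hm : 0 < m) (hn : 0 < n)
    (hG : IsTwoCrossingEdgesGraph m n G)
    {N t : ℕ} {c : Fin N → Fin N → Fin t} (h : HasMonoCopy G c) : HasMonoCrossingPair m n c := by
  obtain ⟨k, f, hf, hcol⟩ := h
  have edge : ∀ u v : Fin (m + n),
      (u : ℕ) = 0 ∧ (v : ℕ) = m ∨ (u : ℕ) = m - 1 ∧ (v : ℕ) = m + n - 1 → c (f u) (f v) = k :=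
    fun u v huv =>
      have hlt : u < v := by omega
      hcol u v hlt ((hG u v hlt).2 huv)
  let p₀ : Fin (m + n) := ⟨0, by omega⟩
  let p₁ : Fin (m + n) := ⟨m - 1, by omega⟩
  let p₂ : Fin (m + n) := ⟨m, by omega⟩
  let p₃ : Fin (m + n) := ⟨m + n - 1, by omega⟩
  have gap₀₁ : (f p₀ : ℕ) + (m - 1) ≤ f p₁ := hf.fin_val_add_le (by simp [p₀, p₁])
  have gap₂₃ : (f p₂ : ℕ) + (n - 1) ≤ f p₃ := hf.fin_val_add_le (by simp [p₂, p₃]; omega)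
  have lt₁₂ : f p₁ < f p₂ := hf (by simp only [p₁, p₂, Fin.mk_lt_mk]; omega)
  refine ⟨f p₀, f p₁, f p₂, f p₃, gap₀₁, lt₁₂, gap₂₃,
    (edge p₀ p₂ (.inl ⟨rfl, rfl⟩)).trans (edge p₁ p₃ (.inr ⟨rfl, rfl⟩)).symm⟩

theorem HasMonoCrossingPair.hasMonoCopy (hm : 2 ≤ m) (hn : 2 ≤ n)
    (hG : IsTwoCrossingEdgesGraph m n G)
    {N t : ℕ} {c : Fin N → Fin N → Fin t} (h : HasMonoCrossingPair m n c) : HasMonoCopy G c := by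
  obtain ⟨a, b, e, d, hab, hbe, hed, hcol⟩ := h
  have hd := d.isLt
  -- `v_1 ↦ a`, `v_{m+1} ↦ e`; the blocks `v_2 … v_m` and `v_{m+2} … v_{m+n}` end at `b` and `d`.
  let pos : Fin (m + n) → ℕ := fun i =>
    if (i : ℕ) = 0 then a else if (i : ℕ) < m then (b : ℕ) + 1 + i - m
    else if (i : ℕ) = m then e else (d : ℕ) + 1 + i - m - n
  let g : Fin (m + n) → Fin N := fun i => ⟨pos i, by simp only [pos]; split_ifs <;> omega⟩
  have hg_mono : StrictMono g := fun i j hij => show pos i < pos j by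
    simp only [pos]
    split_ifs <;> omega
  refine ⟨c a e, g, hg_mono, fun u v huv hadj => ?_⟩
  rcases (hG u v huv).1 hadj with ⟨hu, hv⟩ | ⟨hu, hv⟩
  · rw [show g u = a from Fin.ext (by simp [g, pos, hu]),
      show g v = e from Fin.ext (show pos v = e by simp only [pos]; split_ifs <;> omega)]
  · rw [show g u = b from Fin.ext (show pos u = b by simp only [pos]; split_ifs <;> omega),
      show g v = d from Fin.ext (show pos v = d by simp only [pos]; split_ifs <;> omega), hcol]

end TwoCrossingEdges

/-- If `G` is the ordered graph on `v_1,…,v_{m+n}` whose only edges are the crossing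
edges `v_1 v_{m+1}` and `v_m v_{m+n}`, then `R(G) = m + n + max(m,n) - 1`. -/
theorem stmt6 {m n : ℕ} (hm : 2 ≤ m) (hn : 2 ≤ n)
    (G : SimpleGraph (Fin (m + n)))
    (hG : G = SimpleGraph.fromEdgeSet
      {s((⟨0, by omega⟩ : Fin (m + n)), (⟨m, by omega⟩ : Fin (m + n))),
       s((⟨m - 1, by omega⟩ : Fin (m + n)), (⟨m + n - 1, by omega⟩ : Fin (m + n)))}) :
    orderedRamsey 2 G = m + n + max m n - 1 := by
  have hadj : IsTwoCrossingEdgesGraph m n G := by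
    intro u v huv
    simp only [hG, SimpleGraph.fromEdgeSet_adj, Set.mem_insert_iff, Set.mem_singleton_iff,
      Sym2.eq_iff, Fin.ext_iff]
    omega
  exact orderedRamsey_eq_of_forall
    (fun c => (hasMonoCrossingPair_of_le_card (by omega) (by omega) le_rfl c).hasMonoCopy hm hn hadj)
    (fun _ hN => (exists_not_hasMonoCrossingPair hN).imp
      fun _ hc hcopy => hc (hcopy.hasMonoCrossingPair (by omega) (by omega) hadj))
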